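/- arXiv:2301.06326 — 2 statements merged into one kernel-verified Lean document; each statement's English description precedes it below -/
import Mathlib

section
/- Let π : su(N) → su(N) be an orthogonal projection with respect to the inner product ⟨A,B⟩ = −tr(AB), and suppose Δ_N commutes with π. If W̄ solves the projected equation dW̄/dt = π[P̄, W̄] with Δ_N P̄ = W̄ and W̄ in the range of π, then the enstrophy tr(W̄²) is conserved. -/
open Matrix

attribute [local instance] Matrix.normedAddCommGroup Matrix.normedSpace

/-!
Along a solution, `d/dt tr(W̄²) = 2 tr(π[P̄, W̄] W̄)`. Since `π` is symmetric for the trace form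
and `πW̄ = W̄`, this equals `2 tr([P̄, W̄] W̄)`, which vanishes by cyclicity of the trace.
-/

theorem Matrix.trace_commutator_mul_self {n α : Type*} [Fintype n] [CommRing α]
    (A B : Matrix n n α) : trace ((A * B - B * A) * B) = 0 := by
  rw [sub_mul, trace_sub, trace_mul_cycle B A B, Matrix.mul_assoc A, trace_mul_comm A, sub_self]

theorem HasDerivAt.matrix_trace_mul {𝕜 R n : Type*} [NontriviallyNormedField 𝕜] [CompleteSpace 𝕜]
    [NormedRing R] [NormedAlgebra 𝕜 R] [FiniteDimensional 𝕜 R] [Fintype n]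
    {W V : 𝕜 → Matrix n n R} {W' V' : Matrix n n R} {t : 𝕜}
    (hW : HasDerivAt W W' t) (hV : HasDerivAt V V' t) :
    HasDerivAt (fun s => trace (W s * V s)) (trace (W' * V t) + trace (W t * V')) t := by
  let B : Matrix n n R →L[𝕜] Matrix n n R →L[𝕜] R :=
    ((LinearMap.mul 𝕜 (Matrix n n R)).compr₂ (traceLinearMap n 𝕜 R)).toContinuousBilinearMap
  rw [add_comm]
  exact B.hasDerivAt_of_bilinear (fun _ => hW) (fun _ => hV)

theorem projected_enstrophy_conserved_general (N : ℕ)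
    (p : Matrix (Fin N) (Fin N) ℂ →ₗ[ℝ] Matrix (Fin N) (Fin N) ℂ)
    (hpsym : ∀ A B : Matrix (Fin N) (Fin N) ℂ,
      -Matrix.trace (p A * B) = -Matrix.trace (A * p B))
    (W P : ℝ → Matrix (Fin N) (Fin N) ℂ)
    (hrange : ∀ t, p (W t) = W t)
    (hODE : ∀ t, HasDerivAt W (p (P t * W t - W t * P t)) t) :
    ∀ t, HasDerivAt (fun s => Matrix.trace (W s * W s)) 0 t := by
  intro t
  have hdot : trace (p (P t * W t - W t * P t) * W t) = 0 := by
    rw [neg_injective (hpsym _ _), hrange, trace_commutator_mul_self]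
  have hderiv := (hODE t).matrix_trace_mul (hODE t)
  rwa [trace_mul_comm (W t), hdot, add_zero] at hderiv

/-- Let `π` be an orthogonal projection on `su(N)` for `⟨A,B⟩ = -tr(A*B)` and let `Δ_N`
be an invertible symmetric operator commuting with `π`.  If `W̄` solves the projected
Euler–Zeitlin equation `dW̄/dt = π[P̄,W̄]`, `Δ_N P̄ = W̄`, with `W̄` in the range of `π`,
then the enstrophy `tr(W̄²)` is conserved. -/
theorem projected_enstrophy_conserved (N : ℕ)
    (p D : Matrix (Fin N) (Fin N) ℂ →ₗ[ℝ] Matrix (Fin N) (Fin N) ℂ)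
    (hproj : ∀ A, p (p A) = p A)
    (hpsym : ∀ A B : Matrix (Fin N) (Fin N) ℂ,
      -Matrix.trace (p A * B) = -Matrix.trace (A * p B))
    (hDbij : Function.Bijective D)
    (hDsym : ∀ A B : Matrix (Fin N) (Fin N) ℂ,
      -Matrix.trace (A * D B) = -Matrix.trace (D A * B))
    (hcomm : ∀ A, D (p A) = p (D A))
    (W P : ℝ → Matrix (Fin N) (Fin N) ℂ)
    (hsu : ∀ t, (W t)ᴴ = -(W t) ∧ Matrix.trace (W t) = 0)
    (hrange : ∀ t, p (W t) = W t)
    (hPoisson : ∀ t, D (P t) = W t)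
    (hODE : ∀ t, HasDerivAt W (p (P t * W t - W t * P t)) t) :
    ∀ t, HasDerivAt (fun s => Matrix.trace (W s * W s)) 0 t :=
  projected_enstrophy_conserved_general N p hpsym W P hrange hODE
end

section
/- For W̄ in the range of an orthogonal projection π on su(N), and P̄ = Δ_N⁻¹ W̄ with Δ_N symmetric, invertible, and commuting with π, each noise vector field V_k(W̄) = π[P̄, T_k] of the energy-preserving closure satisfies ⟨P̄, V_k(W̄)⟩ = 0, hence the energy H(W̄) = ½ tr(P̄ W̄) is conserved along the Stratonovich SDE dW̄ = π[P̄,W̄] dt + Σ_k π[P̄, T_k] ∘ dβᵏ. -/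
open Matrix

/-- Energy conservation for the energy-preserving stochastic closure
`dW̄ = π[P̄,W̄] dt + Σ_k π[P̄,T_k] ∘ dβᵏ`: with `π` an orthogonal projection on `su(N)`,
`Δ_N` symmetric, invertible and commuting with `π`, `W̄` in the range of `π`, and
`P̄ = Δ_N⁻¹ W̄`, each noise vector field `V_k(W̄) = π[P̄,T_k]` satisfies `⟨P̄,V_k(W̄)⟩ = 0`
— i.e. `tr(P̄ * π[P̄,A]) = 0` for every `A ∈ su(N)` — and likewise the drift satisfies
`tr(P̄ * π[P̄,W̄]) = 0`; hence the energy `H(W̄) = ½ tr(P̄ W̄)` is conserved. -/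
theorem strat_energy_algebraic (N : ℕ)
    (p D : Matrix (Fin N) (Fin N) ℂ →ₗ[ℝ] Matrix (Fin N) (Fin N) ℂ)
    (hproj : ∀ X, p (p X) = p X)
    (hpsym : ∀ X Y : Matrix (Fin N) (Fin N) ℂ,
      -Matrix.trace (p X * Y) = -Matrix.trace (X * p Y))
    (hDbij : Function.Bijective D)
    (hDsym : ∀ X Y : Matrix (Fin N) (Fin N) ℂ,
      -Matrix.trace (X * D Y) = -Matrix.trace (D X * Y))
    (hcomm : ∀ X, D (p X) = p (D X))
    (W P : Matrix (Fin N) (Fin N) ℂ)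
    (hW : Wᴴ = -W) (hWtr : Matrix.trace W = 0)
    (hrange : p W = W)
    (hPoisson : D P = W) :
    (∀ A : Matrix (Fin N) (Fin N) ℂ, Aᴴ = -A → Matrix.trace A = 0 →
      -Matrix.trace (P * p (P * A - A * P)) = 0) ∧
    -Matrix.trace (P * p (P * W - W * P)) = 0 := by
  have hpP : p P = P := hDbij.1 (by rw [hcomm, hPoisson, hrange])
  have key : ∀ A : Matrix (Fin N) (Fin N) ℂ,
      -Matrix.trace (P * p (P * A - A * P)) = 0 := by
    intro A
    rw [← hpsym P (P * A - A * P), hpP, Matrix.mul_sub, Matrix.trace_sub,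
      ← Matrix.mul_assoc P A P, Matrix.trace_mul_comm (P * A) P]
    ring
  exact ⟨fun A _ _ => key A, key W⟩
end
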